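/- arXiv:2401.03659 — 2 statements merged into one kernel-verified Lean document; each statement's English description precedes it below -/
import Mathlib

section
/- For all complex z not on the negative real axis (−∞,0) and all α ∈ (0,1), one has z^α = (sin(απ)/π) ∫₀^∞ z y^{α−1}/(y+z) dy, where z^α denotes the principal branch. -/
/-
For `x > 0` the substitution `y = x u` reduces `∫₀^∞ y^(α-1) / (y + x) dy` to
`x^(α-1) ∫₀^∞ u^(α-1) / (1 + u) du`, and `u = t / (1 - t)` turns the last integral into
`B(α, 1 - α) = Γ(α) Γ(1 - α) = π / sin (π α)`.
Both sides are holomorphic on the slit plane. For the integral, write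
`y^(α-1) / (y + z) = w(y) (1 + (1 - z) / (y + z))` with `w(y) = y^(α-1) / (1 + y)` integrable:
up to an affine term, it is `(1 - z)` times the Stieltjes transform of the finite measure
`w(y) dy`, which is holomorphic off its support `[0, ∞)`. The identity theorem then extends the
formula from the positive reals to the slit plane.
-/

open MeasureTheory Set Filter Topology Complex Asymptotics
open scoped Real

theorem integrableOn_rpow_div_one_add {α : ℝ} (h0 : 0 < α) (h1 : α < 1) :
    IntegrableOn (fun y : ℝ => y ^ (α - 1) / (1 + y)) (Ioi 0) := by
  have hcont : ContinuousOn (fun y : ℝ => (1 + y)⁻¹) (Ici 0) :=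
    (continuousOn_const.add continuousOn_id).inv₀ fun y (hy : 0 ≤ y) =>
      (by linarith : (0 : ℝ) < 1 + y).ne'
  have htop : (fun y : ℝ => (1 + y)⁻¹) =O[atTop] (· ^ (-1 : ℝ)) := by
    refine IsBigO.of_bound 1 ?_
    filter_upwards [eventually_gt_atTop 0] with y hy
    rw [Real.rpow_neg_one, one_mul, norm_inv, norm_inv, Real.norm_of_nonneg hy.le,
      Real.norm_of_nonneg (by positivity)]
    gcongr
    linarith
  have hbot : (fun y : ℝ => (1 + y)⁻¹) =O[𝓝[>] 0] (· ^ (-0 : ℝ)) := by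
    simp only [neg_zero, Real.rpow_zero]
    exact ((hcont 0 self_mem_Ici).tendsto.mono_left
      (nhdsWithin_mono _ Ioi_subset_Ici_self)).isBigO_one ℝ
  simpa only [div_eq_mul_inv] using mellin_convergent_of_isBigO_scalar
    ((hcont.mono Ioi_subset_Ici_self).locallyIntegrableOn measurableSet_Ioi) htop h1 hbot h0

theorem integral_Ioi_zero_eq_integral_Ioo_div_one_sub {E : Type*} [NormedAddCommGroup E]
    [NormedSpace ℝ E] (g : ℝ → E) :
    ∫ y in Ioi 0, g y = ∫ t in Ioo 0 1, ((1 - t) ^ 2)⁻¹ • g (t / (1 - t)) := by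
  have himage : (fun t : ℝ => t / (1 - t)) '' Ioo 0 1 = Ioi 0 := by
    ext y
    constructor
    · rintro ⟨t, ⟨ht0, ht1⟩, rfl⟩
      exact div_pos ht0 (sub_pos.mpr ht1)
    · intro (hy : 0 < y)
      refine ⟨y / (1 + y), ⟨by positivity, (div_lt_one (by positivity)).mpr (by linarith)⟩, ?_⟩
      field_simp
      ring
  have hderiv : ∀ t ∈ Ioo (0 : ℝ) 1,
      HasDerivWithinAt (fun t : ℝ => t / (1 - t)) ((1 - t) ^ 2)⁻¹ (Ioo 0 1) t := by
    rintro t ⟨-, ht1⟩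
    refine ((hasDerivAt_id' t).div ((hasDerivAt_id' t).const_sub 1)
      (sub_pos.mpr ht1).ne').hasDerivWithinAt.congr_deriv ?_
    field_simp
    ring
  have hinj : InjOn (fun t : ℝ => t / (1 - t)) (Ioo 0 1) := by
    rintro a ⟨-, ha⟩ b ⟨-, hb⟩ h
    field_simp [(sub_pos.mpr ha).ne', (sub_pos.mpr hb).ne'] at h
    linarith
  rw [← himage, integral_image_eq_integral_abs_deriv_smul measurableSet_Ioo hderiv hinj]
  refine setIntegral_congr_fun measurableSet_Ioo fun t _ => ?_
  rw [abs_of_nonneg (by positivity)]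

theorem integral_rpow_div_one_add {α : ℝ} (h0 : 0 < α) (h1 : α < 1) :
    ∫ y in Ioi (0 : ℝ), y ^ (α - 1) / (1 + y) = π / Real.sin (π * α) := by
  have hbeta : ∫ y in Ioi (0 : ℝ), y ^ (α - 1) / (1 + y) =
      ∫ t in Ioo (0 : ℝ) 1, t ^ (α - 1) * (1 - t) ^ (-α) := by
    rw [integral_Ioi_zero_eq_integral_Ioo_div_one_sub]
    refine setIntegral_congr_fun measurableSet_Ioo fun t ⟨ht0, ht1⟩ => ?_
    have ht1' : 0 < 1 - t := sub_pos.mpr ht1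
    rw [smul_eq_mul, Real.div_rpow ht0.le ht1'.le, Real.rpow_neg ht1'.le,
      Real.rpow_sub_one ht1'.ne']
    field_simp
    ring
  have hB : ((∫ t in (0 : ℝ)..1, t ^ (α - 1) * (1 - t) ^ (-α) : ℝ) : ℂ) =
      betaIntegral α (1 - α) := by
    rw [← intervalIntegral.integral_ofReal]
    refine intervalIntegral.integral_congr fun t ht => ?_
    rw [uIcc_of_le zero_le_one] at ht
    rw [ofReal_mul, ofReal_cpow ht.1, ofReal_cpow (sub_nonneg.2 ht.2)]
    push_cast
    ring_nf
  have hΓ := Gamma_mul_Gamma_eq_betaIntegral (s := α) (t := 1 - α) (by simpa using h0)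
    (by simpa using h1)
  rw [add_sub_cancel, Gamma_one, one_mul, Gamma_mul_Gamma_one_sub] at hΓ
  apply ofReal_injective
  rw [hbeta, ← integral_Ioc_eq_integral_Ioo, ← intervalIntegral.integral_of_le zero_le_one, hB,
    ← hΓ]
  push_cast
  ring_nf

theorem integral_rpow_div_add (α : ℝ) {x : ℝ} (hx : 0 < x) :
    ∫ y in Ioi (0 : ℝ), y ^ (α - 1) / (y + x) =
      x ^ (α - 1) * ∫ y in Ioi (0 : ℝ), y ^ (α - 1) / (1 + y) := by
  have hscale := integral_comp_mul_left_Ioi (fun y => y ^ (α - 1) / (y + x)) 0 hx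
  rw [mul_zero, smul_eq_mul, eq_inv_mul_iff_mul_eq₀ hx.ne'] at hscale
  rw [← hscale, ← integral_const_mul, ← integral_const_mul]
  refine setIntegral_congr_fun measurableSet_Ioi fun u (hu : 0 < u) => ?_
  rw [Real.mul_rpow hx.le hu.le]
  field_simp
  ring

section Stieltjes

variable {ν : Measure ℝ}

lemma neg_notMem_image_support_of_mem_slitPlane (hν : ∀ᵐ y ∂ν, 0 ≤ y) {z : ℂ} (hz : z ∈ slitPlane) :
    -z ∉ algebraMap ℝ ℂ '' ν.support := by
  rintro ⟨y, hy, hyz⟩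
  rw [Complex.coe_algebraMap, ← neg_eq_iff_eq_neg] at hyz
  exact (Measure.support_subset_of_isClosed isClosed_Ici hν hy).not_gt
    (neg_ofReal_mem_slitPlane.mp (hyz ▸ hz))

lemma resolvent_neg_eq (z : ℂ) : resolvent (-z) = fun y : ℝ => ((y : ℂ) + z)⁻¹ := by
  ext y
  simp [resolvent, Ring.inverse_eq_inv]

variable [IsFiniteMeasure ν]

lemma integrable_inv_ofReal_add (hν : ∀ᵐ y ∂ν, 0 ≤ y) {z : ℂ} (hz : z ∈ slitPlane) :
    Integrable (fun y : ℝ => ((y : ℂ) + z)⁻¹) ν :=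
  resolvent_neg_eq z ▸ integrable_resolvent (neg_notMem_image_support_of_mem_slitPlane hν hz)

theorem analyticOnNhd_integral_inv_ofReal_add (hν : ∀ᵐ y ∂ν, 0 ≤ y) :
    AnalyticOnNhd ℂ (fun z : ℂ => ∫ y, ((y : ℂ) + z)⁻¹ ∂ν) slitPlane := by
  have hT : AnalyticOnNhd ℂ (resolventTransform ν) (algebraMap ℝ ℂ '' ν.support)ᶜ :=
    ((algebraMap_isometry ℝ ℂ).isClosedEmbedding.isClosedMap _
      Measure.isClosed_support).isOpen_compl.analyticOn_iff_analyticOnNhd.mp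
      analyticOn_resolventTransform
  simpa only [Function.comp_def, resolventTransform, Pi.neg_apply, resolvent_neg_eq] using
    hT.comp (analyticOnNhd_id.neg : AnalyticOnNhd ℂ (fun z : ℂ => -z) _)
      fun z hz => neg_notMem_image_support_of_mem_slitPlane hν hz

end Stieltjes

theorem analyticOnNhd_setIntegral_div_ofReal_add {ρ : ℝ → ℝ}
    (hρ : IntegrableOn (fun y => ρ y / (1 + y)) (Ioi 0)) (hρ0 : ∀ y ∈ Ioi (0 : ℝ), 0 ≤ ρ y) :
    AnalyticOnNhd ℂ (fun z : ℂ => ∫ y in Ioi 0, (ρ y : ℂ) / (y + z)) slitPlane := by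
  set ν := (volume.restrict (Ioi (0 : ℝ))).withDensity fun y => ENNReal.ofReal (ρ y / (1 + y))
  have : IsFiniteMeasure ν := isFiniteMeasure_withDensity_ofReal hρ.2
  have hν : ∀ᵐ y ∂ν, 0 ≤ y :=
    (withDensity_absolutelyContinuous _ _).ae_le
      ((ae_restrict_mem measurableSet_Ioi).mono fun y hy => le_of_lt hy)
  have hF : AnalyticOnNhd ℂ (fun z => (ν.real univ : ℂ) + (1 - z) * ∫ y, ((y : ℂ) + z)⁻¹ ∂ν)
      slitPlane :=
    analyticOnNhd_const.add ((analyticOnNhd_const.sub analyticOnNhd_id).mul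
      (analyticOnNhd_integral_inv_ofReal_add hν))
  refine hF.congr isOpen_slitPlane fun z hz => ?_
  have hsplit : ∫ y, (1 + (1 - z) * ((y : ℂ) + z)⁻¹) ∂ν =
      ν.real univ + (1 - z) * ∫ y, ((y : ℂ) + z)⁻¹ ∂ν := by
    rw [integral_add (integrable_const _) ((integrable_inv_ofReal_add hν hz).const_mul _),
      integral_const, integral_const_mul]
    simp
  rw [← hsplit, integral_withDensity_eq_integral_toReal_smul₀ hρ.1.aemeasurable.ennreal_ofReal
    (ae_of_all _ fun _ => ENNReal.ofReal_lt_top)]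
  refine setIntegral_congr_fun measurableSet_Ioi fun y (hy : 0 < y) => ?_
  have hyz : (y : ℂ) + z ≠ 0 := fun h =>
    lt_asymm hy (neg_ofReal_mem_slitPlane.mp (eq_neg_of_add_eq_zero_right h ▸ hz))
  have hy1 : (1 : ℂ) + y ≠ 0 := by exact_mod_cast (by linarith : (1 : ℝ) + y ≠ 0)
  rw [ENNReal.toReal_ofReal (div_nonneg (hρ0 y hy) (by linarith)), Complex.real_smul]
  push_cast
  field_simp
  ring

theorem AnalyticOnNhd.eqOn_slitPlane_of_eq_ofReal {f g : ℂ → ℂ}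
    (hf : AnalyticOnNhd ℂ f slitPlane) (hg : AnalyticOnNhd ℂ g slitPlane)
    (hfg : ∀ x : ℝ, 0 < x → f x = g x) :
    EqOn f g slitPlane := by
  have hreal : ∃ᶠ x : ℝ in 𝓝[≠] 1, f x = g x :=
    ((lt_mem_nhds one_pos).filter_mono nhdsWithin_le_nhds).frequently.mono hfg
  have hto : Tendsto ((↑) : ℝ → ℂ) (𝓝[≠] 1) (𝓝[≠] 1) :=
    continuous_ofReal.continuousWithinAt.tendsto_nhdsWithin fun x hx => by simpa using hx
  exact hf.eqOn_of_preconnected_of_frequently_eq hg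
    (starConvex_one_slitPlane.isPathConnected one_mem_slitPlane).isConnected.isPreconnected
    one_mem_slitPlane (hto.frequently hreal)

lemma ofReal_rpow_sub_one {y : ℝ} (hy : 0 ≤ y) (α : ℝ) :
    ((y ^ (α - 1) : ℝ) : ℂ) = (y : ℂ) ^ ((α : ℂ) - 1) := by
  rw [ofReal_cpow hy]
  push_cast
  rfl

theorem integral_cpow_div_add {α : ℝ} (h0 : 0 < α) (h1 : α < 1) {z : ℂ} (hz : z ∈ slitPlane) :
    ∫ y in Ioi (0 : ℝ), (y : ℂ) ^ ((α : ℂ) - 1) / (y + z) =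
      ((π / Real.sin (π * α) : ℝ) : ℂ) * z ^ ((α : ℂ) - 1) := by
  have hreal : ∀ z : ℂ, ∫ y in Ioi (0 : ℝ), (y : ℂ) ^ ((α : ℂ) - 1) / (y + z) =
      ∫ y in Ioi (0 : ℝ), ((y ^ (α - 1) : ℝ) : ℂ) / (y + z) := fun z =>
    setIntegral_congr_fun measurableSet_Ioi fun y (hy : 0 < y) => by
      rw [ofReal_rpow_sub_one hy.le]
  have hF := analyticOnNhd_setIntegral_div_ofReal_add (integrableOn_rpow_div_one_add h0 h1)
    fun y (hy : 0 < y) => Real.rpow_nonneg hy.le _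
  simp only [← hreal] at hF
  refine hF.eqOn_slitPlane_of_eq_ofReal
    (g := fun z => ((π / Real.sin (π * α) : ℝ) : ℂ) * z ^ ((α : ℂ) - 1))
    (fun z hz => analyticAt_const.mul (analyticAt_id.cpow analyticAt_const hz)) (fun x hx => ?_) hz
  rw [hreal, ← ofReal_rpow_sub_one hx.le, ← integral_rpow_div_one_add h0 h1, mul_comm,
    ← ofReal_mul, ← integral_rpow_div_add α hx, ← integral_complex_ofReal]
  push_cast
  rfl

lemma mem_slitPlane_of_ne_ofReal_neg {z : ℂ} (hz0 : z ≠ 0) (hz : ∀ x : ℝ, x < 0 → z ≠ x) :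
    z ∈ slitPlane := by
  by_contra hzs
  rw [mem_slitPlane_iff, not_or, not_lt, not_not] at hzs
  have hzre : z = z.re := Complex.ext rfl (by simpa using hzs.2)
  exact hz z.re (hzs.1.lt_of_ne fun h => hz0 (by rw [hzre, h, ofReal_zero])) hzre

/-- For all complex `z` not on the negative real axis and `α ∈ (0,1)`,
`z^α = (sin(απ)/π) ∫₀^∞ z y^(α−1)/(y+z) dy` (principal branch). -/
theorem stmt0 (α : ℝ) (hα : α ∈ Set.Ioo (0:ℝ) 1) (z : ℂ)
    (hz : ∀ x : ℝ, x < 0 → z ≠ (x : ℂ)) :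
    z ^ (α : ℂ) =
      ((Real.sin (α * Real.pi) / Real.pi : ℝ) : ℂ) *
        ∫ y in Set.Ioi (0:ℝ), z * (y : ℂ) ^ ((α : ℂ) - 1) / ((y : ℂ) + z) := by
  obtain ⟨h0, h1⟩ := hα
  rcases eq_or_ne z 0 with rfl | hz0
  · simp [zero_cpow (ofReal_ne_zero.mpr h0.ne')]
  have hsin : sin ((α : ℂ) * π) ≠ 0 := by
    exact_mod_cast (Real.sin_pos_of_pos_of_lt_pi (by positivity) (by nlinarith [Real.pi_pos])).ne'
  simp_rw [mul_div_assoc]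
  rw [integral_const_mul, integral_cpow_div_add h0 h1 (mem_slitPlane_of_ne_ofReal_neg hz0 hz),
    cpow_sub _ _ hz0, cpow_one, mul_comm π α]
  push_cast
  field_simp
end

section
/- For all complex z not on the negative real axis (−∞,0) and all α ∈ (0,1), one has z^α = (sin(απ)/(απ)) ∫₀^∞ z/(y^{1/α}+z) dy. -/
/-!
Substituting `y = x ^ α` turns the integral into `α z F(z)` with
`F(z) = ∫₀^∞ x^(α-1) / (x + z) dx`. For real `t > 0`, scaling `x ↦ t x` gives
`F(t) = t^(α-1) F(1)`, and `u ↦ u / (1 - u)` identifies `F(1)` with the Beta integral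
`B(α, 1 - α) = Γ(α) Γ(1 - α) = π / sin(πα)`. Differentiating under the integral sign, `F` is
holomorphic on the slit plane, so `F(z) = π / sin(πα) · z^(α-1)` there by the identity theorem.
-/

open MeasureTheory Set Filter Metric Complex Topology

namespace Complex

lemma norm_add_re_pos_of_mem_slitPlane {z : ℂ} (hz : z ∈ slitPlane) : 0 < ‖z‖ + z.re := by
  rcases mem_slitPlane_iff.1 hz with hre | him
  · linarith [norm_nonneg z]
  · linarith [neg_abs_le z.re, abs_re_lt_norm.2 him]

lemma exists_pos_mul_one_add_le_norm_ofReal_add {z : ℂ} (hz : z ∈ slitPlane) :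
    ∃ ε > 0, ∀ x : ℝ, 0 ≤ x → ε * (1 + x) ≤ ‖(x : ℂ) + z‖ := by
  have hm : 0 < ‖z‖ := norm_pos_iff.2 (slitPlane_ne_zero hz)
  set c := (‖z‖ + z.re) / (2 * ‖z‖)
  have hc : 0 < c := div_pos (norm_add_re_pos_of_mem_slitPlane hz) (by positivity)
  have hc1 : c ≤ 1 := by rw [div_le_one (by positivity)]; linarith [re_le_norm z]
  refine ⟨c * min 1 ‖z‖, by positivity, fun x hx => ?_⟩
  -- `2‖z‖ ‖x + z‖² - (‖z‖ + re z)(x + ‖z‖)² = (‖z‖ - re z)(x - ‖z‖)²`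
  have hsq : c * (x + ‖z‖) ^ 2 ≤ ‖(x : ℂ) + z‖ ^ 2 := by
    have hnorm : ‖z‖ ^ 2 = z.re ^ 2 + z.im ^ 2 := by rw [Complex.sq_norm, normSq_apply]; ring
    rw [div_mul_eq_mul_div, div_le_iff₀ (by positivity), Complex.sq_norm, normSq_apply]
    simp only [add_re, add_im, ofReal_re, ofReal_im, zero_add]
    nlinarith [mul_nonneg (sub_nonneg.2 (re_le_norm z)) (sq_nonneg (x - ‖z‖))]
  have hmin : min 1 ‖z‖ * (1 + x) ≤ x + ‖z‖ := by
    nlinarith [min_le_left 1 ‖z‖, min_le_right 1 ‖z‖]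
  refine le_of_sq_le_sq ?_ (norm_nonneg _)
  calc (c * min 1 ‖z‖ * (1 + x)) ^ 2 ≤ c ^ 2 * (x + ‖z‖) ^ 2 := by
        rw [mul_assoc, mul_pow]; gcongr
    _ ≤ c * (x + ‖z‖) ^ 2 := by gcongr; nlinarith
    _ ≤ _ := hsq

lemma exists_ball_mul_one_add_le_norm_ofReal_add {z : ℂ} (hz : z ∈ slitPlane) :
    ∃ ε > 0, ∀ w ∈ ball z ε, ∀ x : ℝ, 0 ≤ x → ε * (1 + x) ≤ ‖(x : ℂ) + w‖ := by
  obtain ⟨ε, hε, hle⟩ := exists_pos_mul_one_add_le_norm_ofReal_add hz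
  refine ⟨ε / 2, by positivity, fun w hw x hx => ?_⟩
  have hzw : ‖z - w‖ < ε / 2 := by rwa [← dist_eq, dist_comm]
  have htri : ‖(x : ℂ) + z‖ ≤ ‖(x : ℂ) + w‖ + ‖z - w‖ := by
    simpa using norm_add_le ((x : ℂ) + w) (z - w)
  nlinarith [hle x hx]

lemma mem_slitPlane_of_forall_neg_ne_ofReal {z : ℂ} (h0 : z ≠ 0)
    (hz : ∀ x : ℝ, x < 0 → z ≠ x) : z ∈ slitPlane := by
  by_contra hmem
  obtain ⟨hre, him⟩ : z.re ≤ 0 ∧ z.im = 0 := by simpa [mem_slitPlane_iff] using hmem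
  have hz_eq : z = z.re := ext rfl (by simpa using him)
  rcases hre.lt_or_eq with hneg | hzero
  · exact hz _ hneg hz_eq
  · exact h0 (by rw [hz_eq, hzero, ofReal_zero])

end Complex

lemma norm_ofReal_rpow_div_ofReal_add_pow_le {a x ε : ℝ} {w : ℂ} {n : ℕ} (hn : n ≠ 0)
    (hx : 0 ≤ x) (hε : 0 < ε) (hle : ε * (1 + x) ≤ ‖(x : ℂ) + w‖) :
    ‖((x ^ a : ℝ) : ℂ) / ((x : ℂ) + w) ^ n‖ ≤ (ε ^ n)⁻¹ * (x ^ a / (x + 1)) := by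
  have hxa : 0 ≤ x ^ a := Real.rpow_nonneg hx a
  have hpow : (x + 1) * ε ^ n ≤ ‖(x : ℂ) + w‖ ^ n :=
    calc (x + 1) * ε ^ n ≤ (1 + x) ^ n * ε ^ n := by
          gcongr; simpa [add_comm] using le_self_pow₀ (by linarith) hn
      _ = (ε * (1 + x)) ^ n := by rw [mul_pow, mul_comm]
      _ ≤ _ := by gcongr
  rw [norm_div, norm_pow, norm_real, Real.norm_of_nonneg hxa, inv_mul_eq_div, div_div]
  exact div_le_div_of_nonneg_left hxa (by positivity) hpow

lemma rpow_div_one_sub_mul_inv_sq {u : ℝ} (hu : u ∈ Ioo 0 1) (α : ℝ) :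
    ((1 - u) ^ 2)⁻¹ * ((u / (1 - u)) ^ (α - 1) / (u / (1 - u) + 1)) =
      u ^ (α - 1) * (1 - u) ^ (-α) := by
  have h1u : 0 < 1 - u := by linarith [hu.2]
  rw [Real.div_rpow (le_of_lt hu.1) h1u.le, Real.rpow_sub_one h1u.ne', Real.rpow_neg h1u.le]
  have hpow := Real.rpow_pos_of_pos h1u α
  field_simp
  ring

lemma image_div_one_sub_Ioo : (fun u : ℝ => u / (1 - u)) '' Ioo 0 1 = Ioi 0 := by
  ext t
  constructor
  · rintro ⟨u, ⟨hu0, hu1⟩, rfl⟩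
    exact div_pos hu0 (by linarith)
  · intro ht
    have ht0 : 0 < t := ht
    refine ⟨t / (1 + t), ⟨by positivity, by rw [div_lt_one (by linarith)]; linarith⟩, ?_⟩
    field_simp
    ring

section StieltjesRpow

variable {α : ℝ}

noncomputable def stieltjesRpow (α : ℝ) (z : ℂ) : ℂ :=
  ∫ x in Ioi (0 : ℝ), ((x ^ (α - 1) : ℝ) : ℂ) / ((x : ℂ) + z)

lemma integrableOn_rpow_sub_one_div_add_one (hα : α ∈ Ioo 0 1) :
    IntegrableOn (fun x : ℝ => x ^ (α - 1) / (x + 1)) (Ioi 0) := by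
  refine (Real.integrableOn_rpowIntegrand₀₁_Ioi hα zero_le_one).congr_fun (fun x hx => ?_)
    measurableSet_Ioi
  simp [Real.rpowIntegrand₀₁_eq_pow_div hα (le_of_lt hx) zero_le_one]

lemma continuousOn_ofReal_rpow_div_ofReal_add_pow (a : ℝ) {w : ℂ} (n : ℕ)
    (hw : ∀ x : ℝ, 0 < x → (x : ℂ) + w ≠ 0) :
    ContinuousOn (fun x : ℝ => ((x ^ a : ℝ) : ℂ) / ((x : ℂ) + w) ^ n) (Ioi 0) := by
  refine ContinuousOn.div (continuous_ofReal.comp_continuousOn ?_) (by fun_prop)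
    fun x hx => pow_ne_zero n (hw x hx)
  exact fun x hx => (Real.continuousAt_rpow_const x a (Or.inl (ne_of_gt hx))).continuousWithinAt

lemma differentiableAt_stieltjesRpow (hα : α ∈ Ioo 0 1) {z : ℂ} (hz : z ∈ slitPlane) :
    DifferentiableAt ℂ (stieltjesRpow α) z := by
  obtain ⟨ε, hε, hle⟩ := exists_ball_mul_one_add_le_norm_ofReal_add hz
  have hne : ∀ w ∈ ball z ε, ∀ x : ℝ, 0 < x → (x : ℂ) + w ≠ 0 := fun w hw x hx =>
    norm_pos_iff.1 ((by positivity : 0 < ε * (1 + x)).trans_le (hle w hw x hx.le))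
  have hmeas : ∀ w ∈ ball z ε, ∀ n : ℕ, AEStronglyMeasurable
      (fun x : ℝ => ((x ^ (α - 1) : ℝ) : ℂ) / ((x : ℂ) + w) ^ n) (volume.restrict (Ioi 0)) :=
    fun w hw n => (continuousOn_ofReal_rpow_div_ofReal_add_pow _ n (hne w hw)).aestronglyMeasurable
      measurableSet_Ioi
  have hbound : ∀ n ≠ 0, ∀ᵐ x ∂volume.restrict (Ioi 0), ∀ w ∈ ball z ε,
      ‖((x ^ (α - 1) : ℝ) : ℂ) / ((x : ℂ) + w) ^ n‖ ≤ (ε ^ n)⁻¹ * (x ^ (α - 1) / (x + 1)) := by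
    intro n hn
    filter_upwards [ae_restrict_mem measurableSet_Ioi] with x hx w hw
    exact norm_ofReal_rpow_div_ofReal_add_pow_le hn (le_of_lt hx) hε (hle w hw x (le_of_lt hx))
  have hdom := integrableOn_rpow_sub_one_div_add_one hα
  have hz' := mem_ball_self hε (x := z)
  refine (hasDerivAt_integral_of_dominated_loc_of_deriv_le
    (F' := fun w x => -(((x ^ (α - 1) : ℝ) : ℂ) / ((x : ℂ) + w) ^ 2)) (ball_mem_nhds z hε)
    ?_ ?_ ?_ ?_ (hdom.const_mul (ε ^ 2)⁻¹) ?_).2.differentiableAt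
  · filter_upwards [ball_mem_nhds z hε] with w hw
    simpa using hmeas w hw 1
  · refine (hdom.const_mul (ε ^ 1)⁻¹).mono' (by simpa using hmeas z hz' 1) ?_
    filter_upwards [hbound 1 one_ne_zero] with x hx
    simpa using hx z hz'
  · exact (hmeas z hz' 2).neg
  · simpa using hbound 2 two_ne_zero
  · filter_upwards [ae_restrict_mem measurableSet_Ioi] with x hx w hw
    refine ((hasDerivAt_const w ((x ^ (α - 1) : ℝ) : ℂ)).div
      ((hasDerivAt_id' w).const_add (x : ℂ)) (hne w hw x hx)).congr_deriv ?_
    ring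

lemma stieltjesRpow_ofReal (α : ℝ) {t : ℝ} (ht : 0 < t) :
    stieltjesRpow α t = (t : ℂ) ^ ((α : ℂ) - 1) * stieltjesRpow α 1 := by
  have hscale := integral_comp_mul_left_Ioi' (fun x : ℝ => ((x ^ (α - 1) : ℝ) : ℂ) / ((x : ℂ) + t))
    0 ht
  rw [mul_zero] at hscale
  rw [stieltjesRpow, ← hscale, stieltjesRpow, ← integral_const_mul, ← integral_smul]
  refine setIntegral_congr_fun measurableSet_Ioi fun x hx => ?_
  have hx1 : (x : ℂ) + 1 ≠ 0 := by exact_mod_cast (by linarith [mem_Ioi.1 hx] : x + 1 ≠ 0)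
  have ht' : (t : ℂ) ≠ 0 := by exact_mod_cast ht.ne'
  rw [Real.mul_rpow ht.le (le_of_lt hx), show (α : ℂ) - 1 = ((α - 1 : ℝ) : ℂ) by push_cast; ring,
    ← ofReal_cpow ht.le, real_smul]
  push_cast
  field_simp

lemma stieltjesRpow_one (hα : α ∈ Ioo 0 1) :
    stieltjesRpow α 1 = Real.pi / sin (Real.pi * α) := by
  have hderiv : ∀ u ∈ Ioo (0 : ℝ) 1,
      HasDerivWithinAt (fun u : ℝ => u / (1 - u)) ((1 - u) ^ 2)⁻¹ (Ioo 0 1) u := by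
    intro u hu
    have h1u : 1 - u ≠ 0 := by linarith [hu.2]
    refine (((hasDerivAt_id' u).div ((hasDerivAt_id' u).const_sub 1) h1u).congr_deriv
      ?_).hasDerivWithinAt
    field_simp
    ring
  have hinj : InjOn (fun u : ℝ => u / (1 - u)) (Ioo 0 1) := by
    intro u hu v hv huv
    rw [div_eq_div_iff (by linarith [hu.2]) (by linarith [hv.2])] at huv
    linarith
  have hbeta : betaIntegral α (1 - α) = Real.pi / sin (Real.pi * α) := by
    rw [betaIntegral_eq_Gamma_mul_div _ _ (by simpa using hα.1) (by simpa using hα.2),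
      add_sub_cancel, Gamma_one, div_one, Gamma_mul_Gamma_one_sub]
  rw [← hbeta, betaIntegral, intervalIntegral.integral_of_le zero_le_one,
    integral_Ioc_eq_integral_Ioo, stieltjesRpow, ← image_div_one_sub_Ioo,
    integral_image_eq_integral_abs_deriv_smul measurableSet_Ioo hderiv hinj]
  refine setIntegral_congr_fun measurableSet_Ioo fun u hu => ?_
  have h1u : 0 ≤ 1 - u := by linarith [hu.2]
  rw [show (α : ℂ) - 1 = ((α - 1 : ℝ) : ℂ) by push_cast; ring,
    show 1 - (α : ℂ) - 1 = ((-α : ℝ) : ℂ) by push_cast; ring, ← ofReal_cpow (le_of_lt hu.1),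
    ← ofReal_one, ← ofReal_sub, ← ofReal_cpow h1u, abs_of_nonneg (by positivity), real_smul,
    ← ofReal_mul, ← rpow_div_one_sub_mul_inv_sq hu]
  push_cast
  ring

lemma stieltjesRpow_eq (hα : α ∈ Ioo 0 1) {z : ℂ} (hz : z ∈ slitPlane) :
    stieltjesRpow α z = Real.pi / sin (Real.pi * α) * z ^ ((α : ℂ) - 1) := by
  have hF : AnalyticOnNhd ℂ (stieltjesRpow α) slitPlane :=
    DifferentiableOn.analyticOnNhd (fun w hw => (differentiableAt_stieltjesRpow hα hw)
      |>.differentiableWithinAt) isOpen_slitPlane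
  have hG : AnalyticOnNhd ℂ (fun w => Real.pi / sin (Real.pi * α) * w ^ ((α : ℂ) - 1))
      slitPlane :=
    DifferentiableOn.analyticOnNhd (fun w hw => (differentiableAt_id.cpow_const hw).const_mul _
      |>.differentiableWithinAt) isOpen_slitPlane
  have hofReal : Tendsto ofReal (𝓝[≠] (1 : ℝ)) (𝓝[≠] (1 : ℂ)) :=
    continuous_ofReal.continuousWithinAt.tendsto_nhdsWithin fun t ht => by simpa using ht
  have hfreq : ∃ᶠ w in 𝓝[≠] (1 : ℂ),
      stieltjesRpow α w = Real.pi / sin (Real.pi * α) * w ^ ((α : ℂ) - 1) := by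
    refine hofReal.frequently (Eventually.frequently ?_)
    filter_upwards [nhdsWithin_le_nhds (lt_mem_nhds one_pos)] with t ht
    rw [stieltjesRpow_ofReal α ht, stieltjesRpow_one hα, mul_comm]
  exact hF.eqOn_of_preconnected_of_frequently_eq hG
    (starConvex_one_slitPlane.isPathConnected one_mem_slitPlane).isConnected.isPreconnected
    one_mem_slitPlane hfreq hz

end StieltjesRpow

/-- For all complex `z` not on the negative real axis and `α ∈ (0,1)`,
`z^α = (sin(απ)/(απ)) ∫₀^∞ z/(y^(1/α)+z) dy` (principal branch). -/
theorem stmt1 (α : ℝ) (hα : α ∈ Set.Ioo (0:ℝ) 1) (z : ℂ)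
    (hz : ∀ x : ℝ, x < 0 → z ≠ (x : ℂ)) :
    z ^ (α : ℂ) =
      ((Real.sin (α * Real.pi) / (α * Real.pi) : ℝ) : ℂ) *
        ∫ y in Set.Ioi (0:ℝ), z / (((y ^ (1/α) : ℝ) : ℂ) + z) := by
  have hα0 : (α : ℂ) ≠ 0 := by exact_mod_cast hα.1.ne'
  rcases eq_or_ne z 0 with rfl | hz0
  · simp [zero_cpow hα0]
  have hsin : sin (α * Real.pi) ≠ 0 := by
    rw [← ofReal_mul, ← ofReal_sin]
    exact_mod_cast (Real.sin_pos_of_pos_of_lt_pi (by nlinarith [hα.1, Real.pi_pos])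
      (by nlinarith [hα.2, Real.pi_pos])).ne'
  have hint : ∫ y in Ioi (0 : ℝ), z / (((y ^ (1 / α) : ℝ) : ℂ) + z) =
      α * z * stieltjesRpow α z := by
    rw [← integral_comp_rpow_Ioi _ hα.1.ne', stieltjesRpow, ← integral_const_mul]
    refine setIntegral_congr_fun measurableSet_Ioi fun x hx => ?_
    rw [← Real.rpow_mul (le_of_lt hx), mul_one_div_cancel hα.1.ne', Real.rpow_one,
      abs_of_pos hα.1, real_smul]
    push_cast
    ring
  rw [hint, stieltjesRpow_eq hα (mem_slitPlane_of_forall_neg_ne_ofReal hz0 hz),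
    cpow_sub _ _ hz0, cpow_one, mul_comm (Real.pi : ℂ) α]
  push_cast
  field_simp
end
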